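/- Assume Γ ⊆ ℒ is strongly compositional and let π, π' be maximal ⊨*-models of Γ. Then: (i) for every φ ∈ Γ, π ⊨ φ if and only if π' ⊨ φ; and (ii) if Γ is consistent, then the set of maximal models of Γ equals the set of maximal ⊨*-models of Γ. -/

import Mathlib

/-!
Composing a `⊨*`-model `π` with another `⊨*`-model yields a `⊨*`-model extending `π`
(strong compositionality, applied to a witnessing extension of the second factor). So a
maximal `⊨*`-model `π` absorbs every `⊨*`-model `π'`: `π ∘ π' = π`, and hence `π` satisfies
every statement of `Γ` that `π'` satisfies. If some `ρ` satisfies `Γ`, then `τ ∘ ρ ⊨ Γ` for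
every `⊨*`-model `τ`; this makes maximal `⊨*`-models satisfy `Γ`, and shows that a proper
`⊨*`-extension of a maximal model would yield a proper extension satisfying `Γ`.
-/

namespace LexPref

/-- A pair consisting of a variable and a total order (as a binary relation) on its domain. -/
structure LexPair (ι : Type*) (D : ι → Type*) where
  var : ι
  ord : D var → D var → Prop
  isLin : IsLinearOrder (D var) ord

/-- An outcome assigns a value to every variable. -/
abbrev Outcome (ι : Type*) (D : ι → Type*) := ∀ i, D i

/-- A lexicographic model: a list of pairs (variable, total order) with pairwise
distinct variables. -/
abbrev LexModel (ι : Type*) (D : ι → Type*) :=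
  { l : List (LexPair ι D) // (l.map LexPair.var).Nodup }

variable {ι : Type*} {D : ι → Type*}

/-- The list of variables occurring in a lex model. -/
def vars (π : LexModel ι D) : List ι := π.1.map LexPair.var

/-- The empty lex model. -/
def emptyModel : LexModel ι D := ⟨[], List.nodup_nil⟩

/-- Composition of lex models: `π` followed by the pairs of `π'` whose variable does
not occur in `π`. -/
def comp [DecidableEq ι] (π π' : LexModel ι D) : LexModel ι D :=
  ⟨π.1 ++ π'.1.filter (fun p => decide (p.var ∉ vars π)), by
    have h1 : (π'.1.filter (fun p => decide (p.var ∉ vars π))).Sublist π'.1 :=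
      List.filter_sublist
    rw [List.map_append, List.nodup_append]
    refine ⟨π.2, (h1.map LexPair.var).nodup π'.2, ?_⟩
    intro x hx y hy
    obtain ⟨p, hp, rfl⟩ := List.mem_map.mp hy
    have hd := List.of_mem_filter hp
    simp only [decide_eq_true_eq] at hd
    rintro rfl
    exact hd hx⟩

/-- `π'` extends `π`: `π' ≠ π` and the sequence `π'` begins with `π`. -/
def Extends (π' π : LexModel ι D) : Prop := π' ≠ π ∧ π.1 <+: π'.1

/-- `π' ⊒ π`: `π'` extends or equals `π`. -/
def ExtendsEq (π' π : LexModel ι D) : Prop := π.1 <+: π'.1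

/-- Lexicographic weak preference along a list of pairs. -/
def prefList : List (LexPair ι D) → Outcome ι D → Outcome ι D → Prop
  | [], _, _ => True
  | p :: rest, α, β =>
      (α p.var ≠ β p.var ∧ p.ord (α p.var) (β p.var)) ∨
      (α p.var = β p.var ∧ prefList rest α β)

/-- Lexicographic strict preference along a list of pairs. -/
def sprefList : List (LexPair ι D) → Outcome ι D → Outcome ι D → Prop
  | [], _, _ => False
  | p :: rest, α, β =>
      (α p.var ≠ β p.var ∧ p.ord (α p.var) (β p.var)) ∨
      (α p.var = β p.var ∧ sprefList rest α β)

/-- `α ≽_π β`. -/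
def pref (π : LexModel ι D) (α β : Outcome ι D) : Prop := prefList π.1 α β

/-- `α ≻_π β`. -/
def spref (π : LexModel ι D) (α β : Outcome ι D) : Prop := sprefList π.1 α β

/-- `α ≡_π β`: the outcomes agree on all variables of `π`. -/
def eqOn (π : LexModel ι D) (α β : Outcome ι D) : Prop := ∀ X ∈ vars π, α X = β X

section Language

variable {L : Type*} (sat : LexModel ι D → L → Prop)

/-- `π ⊨ Γ`. -/
def satSet (π : LexModel ι D) (Γ : Set L) : Prop := ∀ φ ∈ Γ, sat π φ

/-- `Γ` is consistent: some lex model satisfies it. -/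
def Consistent (Γ : Set L) : Prop := ∃ π, satSet sat π Γ

/-- `π ⊨* φ`: some `π' ⊒ π` satisfies `φ`. -/
def satStar (π : LexModel ι D) (φ : L) : Prop := ∃ π', ExtendsEq π' π ∧ sat π' φ

/-- `π ⊨* Γ`. -/
def satStarSet (π : LexModel ι D) (Γ : Set L) : Prop := ∀ φ ∈ Γ, satStar sat π φ

/-- `φ` is compositional. -/
def CompositionalStmt [DecidableEq ι] (φ : L) : Prop :=
  ∀ π π', sat π φ → sat π' φ → sat (comp π π') φ

/-- `Γ` is compositional. -/
def Compositional [DecidableEq ι] (Γ : Set L) : Prop :=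
  ∀ φ ∈ Γ, CompositionalStmt sat φ

/-- `φ` is strongly compositional. -/
def StronglyCompositionalStmt [DecidableEq ι] (φ : L) : Prop :=
  ∀ π π', satStar sat π φ → sat π' φ → sat (comp π π') φ

/-- `Γ` is strongly compositional. -/
def StronglyCompositional [DecidableEq ι] (Γ : Set L) : Prop :=
  ∀ φ ∈ Γ, StronglyCompositionalStmt sat φ

/-- `π` is a maximal model of `Γ`. -/
def MaximalModel (π : LexModel ι D) (Γ : Set L) : Prop :=
  satSet sat π Γ ∧ ∀ π', Extends π' π → ¬ satSet sat π' Γ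

/-- `π` is a maximal `⊨*`-model of `Γ`. -/
def MaximalStarModel (π : LexModel ι D) (Γ : Set L) : Prop :=
  satStarSet sat π Γ ∧ ∀ π', Extends π' π → ¬ satStarSet sat π' Γ

end Language

/-- `O_σ(𝒜)`: the optimal elements of `A` with respect to `σ`. -/
def opt (σ : LexModel ι D) (A : Set (Outcome ι D)) : Set (Outcome ι D) :=
  {α ∈ A | ∀ β ∈ A, pref σ α β}

/-- Iterated optimisation `𝒜_{π₁,…,π_k}`. -/
def iterOpt : List (LexModel ι D) → Set (Outcome ι D) → Set (Outcome ι D)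
  | [], A => A
  | σ :: rest, A => iterOpt rest (opt σ A)

end LexPref

namespace LexPref

section ExtendsEq

variable {ι : Type*} {D : ι → Type*}

theorem extendsEq_comp [DecidableEq ι] (π σ : LexModel ι D) : ExtendsEq (comp π σ) π :=
  List.prefix_append _ _

theorem ExtendsEq.comp_left [DecidableEq ι] {σ τ : LexModel ι D} (h : ExtendsEq τ σ)
    (π : LexModel ι D) : ExtendsEq (comp π τ) (comp π σ) := by
  obtain ⟨t, ht⟩ := h.filter (fun p : LexPair ι D => decide (p.var ∉ vars π))
  exact ⟨t, by simp only [comp, ← ht, List.append_assoc]⟩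

theorem Extends.trans_extendsEq {ρ σ τ : LexModel ι D} (hστ : Extends σ τ)
    (hρσ : ExtendsEq ρ σ) : Extends ρ τ := by
  refine ⟨?_, hστ.2.trans hρσ⟩
  rintro rfl
  exact hστ.1 (Subtype.ext (hρσ.sublist.antisymm hστ.2.sublist))

end ExtendsEq

section Satisfaction

variable {ι : Type*} {D : ι → Type*} {L : Type*} {sat : LexModel ι D → L → Prop} {Γ : Set L}

theorem satStar_of_sat {π : LexModel ι D} {φ : L} (h : sat π φ) : satStar sat π φ :=
  ⟨π, List.prefix_refl _, h⟩

theorem satStarSet_of_satSet {π : LexModel ι D} (h : satSet sat π Γ) : satStarSet sat π Γ :=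
  fun φ hφ => satStar_of_sat (h φ hφ)

theorem MaximalStarModel.eq_of_extendsEq {π σ : LexModel ι D}
    (hπ : MaximalStarModel sat π Γ) (hσπ : ExtendsEq σ π) (hσ : satStarSet sat σ Γ) :
    σ = π :=
  by_contra fun hne => hπ.2 σ ⟨hne, hσπ⟩ hσ

variable [DecidableEq ι] (hsc : StronglyCompositional sat Γ)
include hsc

theorem StronglyCompositional.satSet_comp {π ρ : LexModel ι D}
    (hπ : satStarSet sat π Γ) (hρ : satSet sat ρ Γ) : satSet sat (comp π ρ) Γ :=
  fun φ hφ => hsc φ hφ π ρ (hπ φ hφ) (hρ φ hφ)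

theorem StronglyCompositional.satStarSet_comp {π π' : LexModel ι D}
    (hπ : satStarSet sat π Γ) (hπ' : satStarSet sat π' Γ) :
    satStarSet sat (comp π π') Γ := by
  intro φ hφ
  obtain ⟨τ, hτπ', hτ⟩ := hπ' φ hφ
  exact ⟨comp π τ, hτπ'.comp_left π, hsc φ hφ π τ (hπ φ hφ) hτ⟩

theorem StronglyCompositional.comp_eq_of_maximalStarModel {π π' : LexModel ι D}
    (hπ : MaximalStarModel sat π Γ) (hπ' : satStarSet sat π' Γ) : comp π π' = π :=
  hπ.eq_of_extendsEq (extendsEq_comp π π') (hsc.satStarSet_comp hπ.1 hπ')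

theorem StronglyCompositional.sat_of_maximalStarModel {π π' : LexModel ι D}
    (hπ : MaximalStarModel sat π Γ) (hπ' : satStarSet sat π' Γ) {φ : L} (hφ : φ ∈ Γ)
    (h : sat π' φ) : sat π φ :=
  hsc.comp_eq_of_maximalStarModel hπ hπ' ▸ hsc φ hφ π π' (hπ.1 φ hφ) h

theorem StronglyCompositional.satSet_of_maximalStarModel {τ ρ : LexModel ι D}
    (hτ : MaximalStarModel sat τ Γ) (hρ : satSet sat ρ Γ) : satSet sat τ Γ :=
  fun _ hφ => hsc.sat_of_maximalStarModel hτ (satStarSet_of_satSet hρ) hφ (hρ _ hφ)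

theorem StronglyCompositional.maximalModel_iff_maximalStarModel
    (hΓ : Consistent sat Γ) (τ : LexModel ι D) :
    MaximalModel sat τ Γ ↔ MaximalStarModel sat τ Γ := by
  obtain ⟨ρ, hρ⟩ := hΓ
  constructor
  · rintro ⟨hτ, hτmax⟩
    refine ⟨satStarSet_of_satSet hτ, fun σ hστ hσ => ?_⟩
    exact hτmax (comp σ ρ) (hστ.trans_extendsEq (extendsEq_comp σ ρ))
      (hsc.satSet_comp hσ hρ)
  · intro hτ
    exact ⟨hsc.satSet_of_maximalStarModel hτ hρ,
      fun σ hστ hσ => hτ.2 σ hστ (satStarSet_of_satSet hσ)⟩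

end Satisfaction

theorem maximal_star_models_agree_general {ι : Type*} {D : ι → Type*} [DecidableEq ι]
    {L : Type*}
    (sat : LexModel ι D → L → Prop) (Γ : Set L)
    (hsc : StronglyCompositional sat Γ)
    (π π' : LexModel ι D)
    (hπ : MaximalStarModel sat π Γ) (hπ' : MaximalStarModel sat π' Γ) :
    (∀ φ ∈ Γ, sat π φ ↔ sat π' φ) ∧
    (Consistent sat Γ →
      ∀ τ, MaximalModel sat τ Γ ↔ MaximalStarModel sat τ Γ) :=
  ⟨fun _ hφ =>
      ⟨hsc.sat_of_maximalStarModel hπ' hπ.1 hφ, hsc.sat_of_maximalStarModel hπ hπ'.1 hφ⟩,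
    hsc.maximalModel_iff_maximalStarModel⟩

/-- for strongly compositional `Γ` and maximal `⊨*`-models `π, π'`:
they satisfy the same elements of `Γ`, and if `Γ` is consistent then the maximal
models of `Γ` are exactly the maximal `⊨*`-models of `Γ`. -/
theorem maximal_star_models_agree {ι : Type*} {D : ι → Type*} [DecidableEq ι]
    [Fintype ι] [∀ i, Fintype (D i)] {L : Type*}
    (sat : LexModel ι D → L → Prop) (Γ : Set L)
    (hsc : StronglyCompositional sat Γ)
    (π π' : LexModel ι D)
    (hπ : MaximalStarModel sat π Γ) (hπ' : MaximalStarModel sat π' Γ) :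
    (∀ φ ∈ Γ, sat π φ ↔ sat π' φ) ∧
    (Consistent sat Γ →
      ∀ τ, MaximalModel sat τ Γ ↔ MaximalStarModel sat τ Γ) :=
  maximal_star_models_agree_general sat Γ hsc π π' hπ hπ'

end LexPref
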